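/- arXiv:1602.00400 — 3 statements merged into one kernel-verified Lean document; each statement's English description precedes it below -/
import Mathlib

section
/- Let 𝔣 be a finite field and let Ā and B̄ be nonempty subsets of 𝔣. Then (1/|𝔣^×|) Σ_{α ∈ 𝔣^×} ‖P_Ā ∗ (α P_B̄)‖_2² ≤ min(1, 1/(|Ā||B̄|) + 1/|𝔣|). -/
set_option synthInstance.maxHeartbeats 1000000
set_option maxHeartbeats 2000000

/-- The uniform probability distribution on a finite subset `X` of `𝔣`:
`P_X(x) = 1/|X|` if `x ∈ X` and `0` otherwise. -/
noncomputable def unifDist {𝔣 : Type*} [DecidableEq 𝔣] (X : Finset 𝔣) : 𝔣 → ℝ :=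
  fun x => if x ∈ X then 1 / (X.card : ℝ) else 0

/-- Additive convolution of two distributions: `(μ ∗ ν)(z) := Σ_{x+y=z} μ(x)ν(y)`. -/
def convDist {𝔣 : Type*} [AddCommGroup 𝔣] [Fintype 𝔣] (μ ν : 𝔣 → ℝ) : 𝔣 → ℝ :=
  fun z => ∑ x : 𝔣, μ x * ν (z - x)

/-- The scaled distribution `(αν)(x) := ν(α⁻¹x)` for a unit `α`. -/
def scaleDist {𝔣 : Type*} [Field 𝔣] (α : 𝔣ˣ) (ν : 𝔣 → ℝ) : 𝔣 → ℝ :=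
  fun x => ν (((α⁻¹ : 𝔣ˣ) : 𝔣) * x)

/-- The squared `ℓ²`-norm `‖μ‖₂² := Σ_x μ(x)²`. -/
def l2NormSq {𝔣 : Type*} [Fintype 𝔣] (μ : 𝔣 → ℝ) : ℝ :=
  ∑ x : 𝔣, (μ x) ^ 2

/-! Write `‖μ ∗ αν‖² = Σ_{x,y} μ(x) μ(y) R_ν(α⁻¹(x - y))`, where `R_ν(c) = Σ_u ν(u) ν(u + c)` is
the autocorrelation of `ν`. As `α` runs over `𝔣^×`, so does `α⁻¹ d` for `d ≠ 0`; hence the `α`-sum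
of `R_ν(α⁻¹ d)` is `(q - 1) ‖ν‖²` for `d = 0` and `(Σ ν)² - ‖ν‖²` otherwise, which yields the
exact identity
`Σ_α ‖μ ∗ αν‖² = (q - 1) ‖μ‖² ‖ν‖² + ((Σ μ)² - ‖μ‖²) ((Σ ν)² - ‖ν‖²)`.
For uniform distributions this is `(q - 1)/(|Ā||B̄|) + (1 - 1/|Ā|)(1 - 1/|B̄|)`, and the bound is
elementary. -/

open Finset

theorem Fintype.sum_units_eq_sum_sub_zero {G₀ : Type*} [GroupWithZero G₀] [Fintype G₀]
    [DecidableEq G₀] {M : Type*} [AddCommGroup M] (g : G₀ → M) :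
    ∑ α : G₀ˣ, g α = ∑ a, g a - g 0 := by
  rw [eq_sub_iff_add_eq, Fintype.sum_equiv unitsEquivNeZero (fun α : G₀ˣ => g α)
      (fun a : {a : G₀ // a ≠ 0} => g a) (fun _ => rfl),
    ← Finset.sum_subtype (univ.erase 0) (by simp) g, sum_erase_add _ _ (mem_univ 0)]

theorem Fintype.sum_units_mul_right {𝔣 : Type*} [Field 𝔣] [Fintype 𝔣] [DecidableEq 𝔣]
    {M : Type*} [AddCommGroup M] (g : 𝔣 → M) (d : 𝔣) :
    ∑ α : 𝔣ˣ, g (α * d) = if d = 0 then Fintype.card 𝔣ˣ • g 0 else ∑ a, g a - g 0 := by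
  split_ifs with hd
  · simp [hd]
  · rw [← Fintype.sum_units_eq_sum_sub_zero]
    exact Fintype.sum_equiv (Equiv.mulRight (Units.mk0 d hd)) _ _ (fun _ => rfl)

section Autocorrelation

variable {G : Type*} [AddCommGroup G] [Fintype G]

def autocorr (ν : G → ℝ) (c : G) : ℝ :=
  ∑ u, ν u * ν (u + c)

theorem autocorr_zero (ν : G → ℝ) : autocorr ν 0 = l2NormSq ν := by
  simp [autocorr, l2NormSq, sq]

theorem sum_autocorr (ν : G → ℝ) : ∑ c, autocorr ν c = (∑ u, ν u) ^ 2 := by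
  unfold autocorr
  rw [sq, sum_mul_sum, sum_comm]
  exact sum_congr rfl fun u _ =>
    Fintype.sum_equiv (Equiv.addLeft u) _ _ fun _ => rfl

theorem l2NormSq_convDist (μ ν : G → ℝ) :
    l2NormSq (convDist μ ν) = ∑ x, ∑ y, μ x * μ y * autocorr ν (x - y) := by
  simp_rw [l2NormSq, convDist, sq, sum_mul_sum, autocorr, mul_sum]
  rw [sum_comm]
  refine sum_congr rfl fun x _ => ?_
  rw [sum_comm]
  refine sum_congr rfl fun y _ => ?_
  refine (Fintype.sum_equiv (Equiv.addLeft x) _ _ fun u => ?_).symm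
  simp only [Equiv.coe_addLeft, add_sub_cancel_left]
  rw [show x + u - y = u + (x - y) by abel]
  ring

theorem sum_sum_mul_mul_ite_sub_eq_zero [DecidableEq G] (μ : G → ℝ) (a b : ℝ) :
    ∑ x, ∑ y, μ x * μ y * (if x - y = 0 then a else b) =
      l2NormSq μ * a + ((∑ x, μ x) ^ 2 - l2NormSq μ) * b := by
  have split (x y : G) : μ x * μ y * (if x - y = 0 then a else b) =
      μ x * μ y * b + if x = y then μ x * μ y * (a - b) else 0 := by
    by_cases h : x = y <;> simp [h, sub_eq_zero]; ring
  simp_rw [split, sum_add_distrib, sum_ite_eq, mem_univ, if_true, ← sum_mul, ← mul_sum,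
    ← sum_mul, l2NormSq, sq]
  ring

end Autocorrelation

theorem autocorr_scaleDist {𝔣 : Type*} [Field 𝔣] [Fintype 𝔣] (α : 𝔣ˣ) (ν : 𝔣 → ℝ) (c : 𝔣) :
    autocorr (scaleDist α ν) c = autocorr ν (((α⁻¹ : 𝔣ˣ) : 𝔣) * c) := by
  refine Fintype.sum_equiv (Units.mulLeft α⁻¹) _ _ fun u => ?_
  simp [scaleDist, mul_add]

theorem sum_units_autocorr_inv_mul {𝔣 : Type*} [Field 𝔣] [Fintype 𝔣] [DecidableEq 𝔣]
    (ν : 𝔣 → ℝ) (d : 𝔣) :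
    ∑ α : 𝔣ˣ, autocorr ν (((α⁻¹ : 𝔣ˣ) : 𝔣) * d) =
      if d = 0 then Fintype.card 𝔣ˣ * l2NormSq ν else (∑ u, ν u) ^ 2 - l2NormSq ν := by
  rw [Fintype.sum_equiv (Equiv.inv 𝔣ˣ) (fun α : 𝔣ˣ => autocorr ν (((α⁻¹ : 𝔣ˣ) : 𝔣) * d))
      (fun α : 𝔣ˣ => autocorr ν (α * d)) fun _ => rfl,
    Fintype.sum_units_mul_right, autocorr_zero, sum_autocorr, nsmul_eq_mul]

theorem sum_units_l2NormSq_convDist_scaleDist {𝔣 : Type*} [Field 𝔣] [Fintype 𝔣]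
    [DecidableEq 𝔣] (μ ν : 𝔣 → ℝ) :
    ∑ α : 𝔣ˣ, l2NormSq (convDist μ (scaleDist α ν)) =
      Fintype.card 𝔣ˣ * l2NormSq μ * l2NormSq ν +
        ((∑ x, μ x) ^ 2 - l2NormSq μ) * ((∑ u, ν u) ^ 2 - l2NormSq ν) := by
  simp_rw [l2NormSq_convDist, autocorr_scaleDist]
  rw [sum_comm]
  simp_rw [sum_comm (γ := 𝔣ˣ), ← mul_sum, sum_units_autocorr_inv_mul,
    sum_sum_mul_mul_ite_sub_eq_zero]
  ring

theorem sum_unifDist {α : Type*} [DecidableEq α] [Fintype α] {X : Finset α} (hX : X.Nonempty) :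
    ∑ x, unifDist X x = 1 := by
  have : (X.card : ℝ) ≠ 0 := by exact_mod_cast hX.card_ne_zero
  simp [unifDist, sum_ite_mem, this]

theorem l2NormSq_unifDist {α : Type*} [DecidableEq α] [Fintype α] (X : Finset α) :
    l2NormSq (unifDist X) = 1 / X.card := by
  simp only [l2NormSq, unifDist, ite_pow, ne_eq, OfNat.ofNat_ne_zero, not_false_eq_true,
    zero_pow, sum_ite_mem, univ_inter, sum_const, nsmul_eq_mul]
  rcases eq_or_ne (X.card : ℝ) 0 with h | h
  · simp [h]
  · field_simp

theorem uniform_average_le_min {m n u : ℝ} (hm : 1 ≤ m) (hn : 1 ≤ n)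
    (hnu : n ≤ u + 1) (hu : 1 ≤ u) :
    1 / u * (u * (1 / m) * (1 / n) + (1 - 1 / m) * (1 - 1 / n)) ≤
      min 1 (1 / (m * n) + 1 / (u + 1)) := by
  have hmn : 0 < m * n := by positivity
  have key : 1 / u * (u * (1 / m) * (1 / n) + (1 - 1 / m) * (1 - 1 / n)) =
      1 / (m * n) + (m - 1) * (n - 1) / (u * (m * n)) := by
    field_simp
  rw [key, le_min_iff]
  constructor
  · have hmn1 : 0 ≤ (m - 1) * (n - 1) := mul_nonneg (by linarith) (by linarith)
    calc 1 / (m * n) + (m - 1) * (n - 1) / (u * (m * n))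
        ≤ 1 / (m * n) + (m - 1) * (n - 1) / (m * n) := by
          linarith [div_le_div_of_nonneg_left hmn1 hmn (le_mul_of_one_le_left hmn.le hu)]
      _ ≤ 1 := by
          rw [← add_div, div_le_one hmn]
          linarith
  · rw [add_le_add_iff_left, div_le_div_iff₀ (by positivity) (by positivity)]
    nlinarith [mul_nonneg (sub_nonneg.2 hm) (sub_nonneg.2 hnu)]

/-- **Lemma 8 (average `ℓ²`-norm of scalar twisted convolutions).**
For nonempty subsets `Ā, B̄` of a finite field `𝔣`:
`(1/|𝔣^×|) Σ_{α ∈ 𝔣^×} ‖P_Ā ∗ (α P_B̄)‖₂² ≤ min(1, 1/(|Ā||B̄|) + 1/|𝔣|)`. -/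
theorem avg_l2_norm_of_convolution
    (𝔣 : Type) [Field 𝔣] [Fintype 𝔣] [DecidableEq 𝔣]
    (Abar Bbar : Finset 𝔣) (hA : Abar.Nonempty) (hB : Bbar.Nonempty) :
    (1 / (Fintype.card 𝔣ˣ : ℝ)) *
        ∑ α : 𝔣ˣ, l2NormSq (convDist (unifDist Abar) (scaleDist α (unifDist Bbar))) ≤
      min 1 (1 / ((Abar.card : ℝ) * (Bbar.card : ℝ)) + 1 / (Fintype.card 𝔣 : ℝ)) := by
  have hq : (Fintype.card 𝔣 : ℝ) = Fintype.card 𝔣ˣ + 1 := by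
    exact_mod_cast Fintype.card_eq_card_units_add_one 𝔣
  rw [sum_units_l2NormSq_convDist_scaleDist, sum_unifDist hA, sum_unifDist hB,
    l2NormSq_unifDist, l2NormSq_unifDist, one_pow, hq]
  refine uniform_average_le_min ?_ ?_ ?_ ?_
  · exact_mod_cast hA.card_pos
  · exact_mod_cast hB.card_pos
  · rw [← hq]
    exact_mod_cast card_le_univ Bbar
  · exact_mod_cast Fintype.card_pos
end

section
/- Let N be a positive integer and T any subset of {0,1,…,N−1}. Then for any positive integers k_1, k_2 with k_1 + k_2 < N, D_T(k_1 + k_2) ≤ D_T(k_1) + D_T(k_2). -/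
/-- `D_T(k) := |(T ∩ [0, N−1−k]) \ (T − k)|` for a subset `T` of `{0, 1, …, N−1}`,
written as the number of `i ∈ T` with `i + k ≤ N − 1` and `i + k ∉ T`. -/
noncomputable def DT (N : ℕ) (T : Set ℕ) (k : ℕ) : ℕ :=
  Nat.card {i : ℕ | i ∈ T ∧ i + k < N ∧ i + k ∉ T}

/-!
An `i` counted by `D_T(k₁ + k₂)` either has `i + k₁ ∉ T`, and is then counted by `D_T(k₁)`,
or has `i + k₁ ∈ T`, and then `i + k₁` is counted by `D_T(k₂)`; the shift `i ↦ i + k₁`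
is injective.
-/

def DTSet (N : ℕ) (T : Set ℕ) (k : ℕ) : Set ℕ :=
  {i : ℕ | i ∈ T ∧ i + k < N ∧ i + k ∉ T}

section

variable (N : ℕ) (T : Set ℕ)

theorem DT_eq_ncard (k : ℕ) : DT N T k = (DTSet N T k).ncard :=
  Nat.card_coe_set_eq _

theorem DTSet_finite (k : ℕ) : (DTSet N T k).Finite :=
  (Set.finite_Iio N).subset fun _ hi => Nat.lt_of_add_right_lt hi.2.1

theorem DTSet_add_subset (k₁ k₂ : ℕ) :
    DTSet N T (k₁ + k₂) ⊆ DTSet N T k₁ ∪ (· + k₁) ⁻¹' DTSet N T k₂ := by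
  rintro i ⟨hiT, hlt, hnotT⟩
  rw [← add_assoc] at hlt hnotT
  by_cases hshift : i + k₁ ∈ T
  · exact Or.inr ⟨hshift, hlt, hnotT⟩
  · exact Or.inl ⟨hiT, by omega, hshift⟩

theorem ncard_preimage_DTSet_add_le (a k : ℕ) :
    ((· + a) ⁻¹' DTSet N T k).ncard ≤ (DTSet N T k).ncard :=
  Set.ncard_le_ncard_of_injOn (· + a) (fun _ h => h) (add_left_injective a).injOn
    (DTSet_finite N T k)

end

theorem DT_subadditive_general
    (N : ℕ) (T : Set ℕ)
    (k₁ k₂ : ℕ) :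
    DT N T (k₁ + k₂) ≤ DT N T k₁ + DT N T k₂ := by
  simp only [DT_eq_ncard]
  calc (DTSet N T (k₁ + k₂)).ncard
      ≤ (DTSet N T k₁ ∪ (· + k₁) ⁻¹' DTSet N T k₂).ncard :=
        Set.ncard_le_ncard (DTSet_add_subset N T k₁ k₂)
          ((DTSet_finite N T k₁).union
            ((DTSet_finite N T k₂).preimage (add_left_injective k₁).injOn))
    _ ≤ (DTSet N T k₁).ncard + ((· + k₁) ⁻¹' DTSet N T k₂).ncard := Set.ncard_union_le _ _
    _ ≤ (DTSet N T k₁).ncard + (DTSet N T k₂).ncard :=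
        Nat.add_le_add_left (ncard_preimage_DTSet_add_le N T k₁ k₂) _

/-- **Lemma 13 (subadditivity of `D_T`).**
For any subset `T` of `{0, …, N−1}` and positive integers `k₁, k₂` with `k₁ + k₂ < N`,
`D_T(k₁ + k₂) ≤ D_T(k₁) + D_T(k₂)`. -/
theorem DT_subadditive
    (N : ℕ) (hN : 0 < N) (T : Set ℕ) (hT : ∀ t ∈ T, t < N)
    (k₁ k₂ : ℕ) (hk₁ : 0 < k₁) (hk₂ : 0 < k₂) (hkN : k₁ + k₂ < N) :
    DT N T (k₁ + k₂) ≤ DT N T k₁ + DT N T k₂ :=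
  DT_subadditive_general N T k₁ k₂
end

section
/- Let 0 < δ < ε < 1. For every finite extension K of ℚ_p whose residue field 𝔣 is sufficiently large (depending on ε and δ), and for any 0 < δ' ≤ εδ/4, the following holds: let N be a positive integer and A ⊆ π_{𝔭^N}(𝒪) satisfy (1) |π_{𝔭^i}(A)| ≥ |𝔣|^{iε} for every integer i with Nδ' ≤ i ≤ N, and (2) |A + A| ≤ |A|·|𝔣|^{Nδ'}. Then there exist a subset A' ⊆ A and integers m_0, …, m_{N−1} such that A' is (m_0,…,m_{N−1})-regular, |A'| ≥ |A|/(2 log |𝔣|)^N, and |π_{𝔭^i}(A')| ≥ |𝔣|^{iε/2} for every integer i with Nδ ≤ i ≤ N. -/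
set_option synthInstance.maxHeartbeats 1000000
set_option maxHeartbeats 2000000

open scoped Pointwise

/-- `Σ_j A`: the set of sums of `j` elements of `A`. -/
def sumSet {R : Type*} [CommRing R] (j : ℕ) (A : Set R) : Set R :=
  {x | ∃ a : Fin j → R, (∀ i, a i ∈ A) ∧ ∑ i, a i = x}

/-- `Π_j A`: the set of products of `j` elements of `A`. -/
def prodSet {R : Type*} [CommRing R] (j : ℕ) (A : Set R) : Set R :=
  {x | ∃ a : Fin j → R, (∀ i, a i ∈ A) ∧ ∏ i, a i = x}

/-- `⟨A⟩_j := Σ_j Π_j A − Σ_j Π_j A`. -/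
def genSet {R : Type*} [CommRing R] (j : ℕ) (A : Set R) : Set R :=
  sumSet j (prodSet j A) - sumSet j (prodSet j A)

/-- The residue map `π_{𝔭^m} : 𝒪 → 𝒪/⟨𝔭^m⟩`. -/
def resMap {O : Type*} [CommRing O] (ϖ : O) (m : ℕ) : O →+* O ⧸ Ideal.span {ϖ ^ m} :=
  Ideal.Quotient.mk (Ideal.span {ϖ ^ m})

/-- For `A ⊆ 𝒪/⟨𝔭^N⟩` (and `i ≤ N`), the image `π_{𝔭^i}(A) ⊆ 𝒪/⟨𝔭^i⟩`,
computed as the image under `π_{𝔭^i}` of the full preimage of `A` in `𝒪`. -/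
def resSet {O : Type*} [CommRing O] (ϖ : O) (N i : ℕ) (A : Set (O ⧸ Ideal.span {ϖ ^ N})) :
    Set (O ⧸ Ideal.span {ϖ ^ i}) :=
  resMap ϖ i '' (resMap ϖ N ⁻¹' A)

/-- `A ⊆ 𝒪/⟨𝔭^N⟩` is `(m_0,…,m_{N−1})`-regular. -/
def IsRegularSubset {O : Type*} [CommRing O] (ϖ : O) (N : ℕ) (m : ℕ → ℕ)
    (A : Set (O ⧸ Ideal.span {ϖ ^ N})) : Prop :=
  ∀ n < N, ∀ x : O,
    resMap ϖ n x ∈ resSet ϖ N n A →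
    Nat.card ↥(resSet ϖ N (n + 1) A ∩
      (resMap ϖ (n + 1) '' {y : O | ∃ z : O, y = x + ϖ ^ n * z})) = m n

/-!
Regularity is produced one level at a time, starting from the top. The fibres of
`A ⊆ 𝒪/𝔭^N` over `π_{𝔭^{N-1}}(A)` have at most `|𝔣|` points. Keeping only the fibres of size at
least a well-chosen `m`, each trimmed to exactly `m` points, loses at most a factor
`H_{|𝔣|} ≤ 1 + log |𝔣|`: since `|A| = ∑_{m ≤ |𝔣|} #{fibres of size ≥ m}`, some `m` has
`m · #{fibres of size ≥ m} ≥ |A| / H_{|𝔣|}`. Recursing on the image in `𝒪/𝔭^{N-1}` and pulling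
back gives a regular `A' ⊆ A` with `|A| ≤ (1 + log |𝔣|)^N |A'|`.

For the projections, let `M` be the largest fibre of `π_{𝔭^i}` on `A`. The map
`(π_{𝔭^i}(a), a') ↦ a + a'` embeds `π_{𝔭^i}(A)` times that fibre into `A + A`, so
`|π_{𝔭^i}(A)| M ≤ |A + A|`, while `|A'| ≤ M |π_{𝔭^i}(A')|`. With the doubling bound and
`(2 log |𝔣|)^N ≤ |𝔣|^{Nεδ/4}` (large residue field) this leaves `|π_{𝔭^i}(A')| ≥ |𝔣|^{iε/2}`
for `i ≥ Nδ`.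
-/

open Finset

section Pigeonhole

variable {ι α β : Type*}

theorem sum_eq_sum_range_card_filter_le (t : Finset ι) (d : ι → ℕ) {q : ℕ}
    (hd : ∀ i ∈ t, d i ≤ q) :
    ∑ i ∈ t, d i = ∑ k ∈ range q, #{i ∈ t | k + 1 ≤ d i} := by
  calc ∑ i ∈ t, d i = ∑ i ∈ t, #{k ∈ range q | k + 1 ≤ d i} := by
        refine sum_congr rfl fun i hi => ?_
        rw [show {k ∈ range q | k + 1 ≤ d i} = range (d i) by
          ext k; simp only [mem_filter, mem_range]; have := hd i hi; omega, card_range]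
    _ = ∑ k ∈ range q, #{i ∈ t | k + 1 ≤ d i} := by
        simp only [card_filter]
        exact sum_comm

theorem exists_sum_le_one_add_log_mul_card_filter_le (t : Finset ι) (d : ι → ℕ) {q : ℕ}
    (hd : ∀ i ∈ t, d i ≤ q) :
    ∃ m : ℕ, (∑ i ∈ t, d i : ℝ) ≤ (1 + Real.log q) * (m * #{i ∈ t | m ≤ d i}) := by
  obtain ⟨m, -, hm⟩ := (range (q + 1)).exists_max_image
    (fun m => m * #{i ∈ t | m ≤ d i}) nonempty_range_add_one
  set M : ℝ := m * #{i ∈ t | m ≤ d i}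
  have level : ∀ k ∈ range q, (#{i ∈ t | k + 1 ≤ d i} : ℝ) ≤ ((k + 1 : ℕ) : ℝ)⁻¹ * M := by
    intro k hk
    have h : ((k + 1 : ℕ) : ℝ) * #{i ∈ t | k + 1 ≤ d i} ≤ M := by
      simp only [M]
      exact_mod_cast hm (k + 1) (by simpa using hk)
    rw [inv_mul_eq_div, le_div_iff₀ (by positivity)]
    linarith
  refine ⟨m, ?_⟩
  calc (∑ i ∈ t, d i : ℝ) = ∑ k ∈ range q, (#{i ∈ t | k + 1 ≤ d i} : ℝ) := by
        exact_mod_cast sum_eq_sum_range_card_filter_le t d hd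
    _ ≤ ∑ k ∈ range q, ((k + 1 : ℕ) : ℝ)⁻¹ * M := sum_le_sum level
    _ = harmonic q * M := by simp [harmonic, sum_mul]
    _ ≤ (1 + Real.log q) * M := by
        gcongr
        exact_mod_cast harmonic_le_one_add_log q

variable [DecidableEq β]

theorem natCard_coe_inter_preimage_singleton (s : Finset α) (f : α → β) (b : β) :
    Nat.card ↥((s : Set α) ∩ f ⁻¹' {b}) = #{a ∈ s | f a = b} := by
  rw [Nat.card_coe_set_eq, ← Set.ncard_coe_finset, coe_filter]
  rfl

theorem exists_subset_card_fiber_eq (s : Finset α) (f : α → β) (m : ℕ) :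
    ∃ s' ⊆ s, (∀ b ∈ s'.image f, #{a ∈ s' | f a = b} = m) ∧
      m * #{b ∈ s.image f | m ≤ #{a ∈ s | f a = b}} ≤ #s' := by
  classical
  set T := {b ∈ s.image f | m ≤ #{a ∈ s | f a = b}}
  have hu : ∀ b ∈ T, ∃ u ⊆ {a ∈ s | f a = b}, #u = m := fun b hb =>
    exists_subset_card_eq (mem_filter.mp hb).2
  choose! u hus hum using hu
  set s' := {a ∈ s | f a ∈ T ∧ a ∈ u (f a)}
  have hfib : ∀ b ∈ T, {a ∈ s' | f a = b} = u b := by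
    intro b hb
    ext a
    simp only [s', mem_filter]
    constructor
    · rintro ⟨⟨-, -, ha⟩, rfl⟩
      exact ha
    · intro ha
      obtain ⟨has, rfl⟩ := mem_filter.mp (hus b hb ha)
      exact ⟨⟨has, hb, ha⟩, rfl⟩
  have hmaps : ∀ a ∈ s', f a ∈ T := fun a ha => by
    simp only [s', mem_filter] at ha
    exact ha.2.1
  refine ⟨s', filter_subset _ _, ?_, ?_⟩
  · intro b hb
    obtain ⟨a, ha, rfl⟩ := mem_image.mp hb
    rw [hfib _ (hmaps a ha), hum _ (hmaps a ha)]
  · exact mul_card_image_le_card_of_maps_to hmaps m fun b hb => by rw [hfib b hb, hum b hb]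

theorem exists_large_subset_card_fiber_eq (s : Finset α) (f : α → β) {q : ℕ}
    (hq : ∀ b, #{a ∈ s | f a = b} ≤ q) :
    ∃ s' ⊆ s, ∃ m : ℕ, (∀ b ∈ s'.image f, #{a ∈ s' | f a = b} = m) ∧
      (#s : ℝ) ≤ (1 + Real.log q) * #s' := by
  obtain ⟨m, hm⟩ := exists_sum_le_one_add_log_mul_card_filter_le (s.image f)
    (fun b => #{a ∈ s | f a = b}) (fun b _ => hq b)
  obtain ⟨s', hs's, hfib, hcard⟩ := exists_subset_card_fiber_eq s f m
  refine ⟨s', hs's, m, hfib, ?_⟩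
  have hsum : (#s : ℝ) = ∑ b ∈ s.image f, (#{a ∈ s | f a = b} : ℝ) := by
    exact_mod_cast card_eq_sum_card_image f s
  calc (#s : ℝ) ≤ (1 + Real.log q) * (m * #{b ∈ s.image f | m ≤ #{a ∈ s | f a = b}}) :=
        hsum ▸ hm
    _ ≤ (1 + Real.log q) * #s' := by
        have := Real.log_natCast_nonneg q
        gcongr
        exact_mod_cast hcard

end Pigeonhole

section Sumset

variable {α β F : Type*} [AddCommGroup α] [AddCommGroup β] [DecidableEq α] [DecidableEq β]
  [FunLike F α β] [AddMonoidHomClass F α β]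

theorem card_image_mul_card_filter_le_card_add (P : F) (s : Finset α) (b : β) :
    #(s.image P) * #{a ∈ s | P a = b} ≤ #(s + s) := by
  have hlift : ∀ c ∈ s.image P, ∃ a ∈ s, P a = c := fun c hc => by simpa using hc
  choose! r hrs hrP using hlift
  rw [← card_product]
  refine card_le_card_of_injOn (fun x => r x.1 + x.2) (fun x hx => ?_) ?_
  · obtain ⟨hc, ha⟩ := mem_product.mp hx
    exact add_mem_add (hrs _ hc) (mem_filter.mp ha).1
  · rintro ⟨c, a⟩ hx ⟨c', a'⟩ hx' h
    simp only [coe_product, Set.mem_prod, mem_coe, mem_filter] at hx hx'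
    have hcc' : c = c' := by
      simpa [hrP _ hx.1, hrP _ hx'.1, hx.2.2, hx'.2.2] using congrArg P h
    subst hcc'
    simp only [Prod.mk.injEq, true_and]
    exact add_left_cancel h

theorem card_image_mul_card_le_card_add_mul_card_image (P : F) {s t : Finset α}
    (hts : t ⊆ s) : #(s.image P) * #t ≤ #(s + s) * #(t.image P) := by
  rcases s.eq_empty_or_nonempty with rfl | hs
  · simp
  obtain ⟨b, -, hb⟩ :=
    (s.image P).exists_max_image (fun b => #{a ∈ s | P a = b}) (hs.image P)
  have ht : #t ≤ #{a ∈ s | P a = b} * #(t.image P) :=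
    card_le_mul_card_image t _ fun c hc =>
      (card_le_card (filter_subset_filter _ hts)).trans (hb c (image_subset_image hts hc))
  calc #(s.image P) * #t ≤ #(s.image P) * #{a ∈ s | P a = b} * #(t.image P) := by
        rw [mul_assoc]
        exact Nat.mul_le_mul_left _ ht
    _ ≤ #(s + s) * #(t.image P) :=
        Nat.mul_le_mul_right _ (card_image_mul_card_filter_le_card_add P s b)

theorem card_image_le_mul_card_image_of_card_add_le (P : F) {s t : Finset α} (hts : t ⊆ s)
    {C K : ℝ} (hC : (#s : ℝ) ≤ C * #t) (hK : (#(s + s) : ℝ) ≤ #s * K) :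
    (#(s.image P) : ℝ) ≤ C * K * #(t.image P) := by
  rcases t.eq_empty_or_nonempty with rfl | ht
  · obtain rfl : s = ∅ := by simpa using hC
    simp
  have hs : (0 : ℝ) < #s := by exact_mod_cast (ht.mono hts).card_pos
  have hK0 : 0 ≤ K := nonneg_of_mul_nonneg_right ((Nat.cast_nonneg _).trans hK) hs
  refine le_of_mul_le_mul_right ?_ (by exact_mod_cast ht.card_pos : (0 : ℝ) < #t)
  calc (#(s.image P) : ℝ) * #t ≤ #(s + s) * #(t.image P) := by
        exact_mod_cast card_image_mul_card_le_card_add_mul_card_image P hts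
    _ ≤ #s * K * #(t.image P) := by gcongr
    _ ≤ C * #t * K * #(t.image P) := by gcongr
    _ = C * K * #(t.image P) * #t := by ring

end Sumset

section Tower

variable {O : Type*} [CommRing O] (ϖ : O)

noncomputable def resProj {i j : ℕ} (h : i ≤ j) :
    O ⧸ Ideal.span {ϖ ^ j} →+* O ⧸ Ideal.span {ϖ ^ i} :=
  Ideal.Quotient.factor (Ideal.span_singleton_le_span_singleton.mpr (pow_dvd_pow ϖ h))

theorem resMap_surjective (n : ℕ) : Function.Surjective (resMap ϖ n) :=
  Ideal.Quotient.mk_surjective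

theorem resMap_eq_resMap_iff {n : ℕ} {x y : O} :
    resMap ϖ n x = resMap ϖ n y ↔ ∃ z, x = y + ϖ ^ n * z := by
  simp only [resMap, Ideal.Quotient.eq, Ideal.mem_span_singleton']
  exact ⟨fun ⟨z, hz⟩ => ⟨z, by rw [mul_comm, hz]; ring⟩,
    fun ⟨z, hz⟩ => ⟨z, by rw [hz]; ring⟩⟩

@[simp]
theorem resProj_resMap {i j : ℕ} (h : i ≤ j) (x : O) :
    resProj ϖ h (resMap ϖ j x) = resMap ϖ i x :=
  Ideal.Quotient.factor_mk _ x

@[simp]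
theorem resProj_resProj {i j k : ℕ} (hij : i ≤ j) (hjk : j ≤ k)
    (a : O ⧸ Ideal.span {ϖ ^ k}) :
    resProj ϖ hij (resProj ϖ hjk a) = resProj ϖ (hij.trans hjk) a := by
  obtain ⟨x, rfl⟩ := resMap_surjective ϖ k a
  simp

@[simp]
theorem resProj_self (n : ℕ) (a : O ⧸ Ideal.span {ϖ ^ n}) : resProj ϖ le_rfl a = a := by
  obtain ⟨x, rfl⟩ := resMap_surjective ϖ n a
  simp

theorem resSet_eq_image {i N : ℕ} (h : i ≤ N) (A : Set (O ⧸ Ideal.span {ϖ ^ N})) :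
    resSet ϖ N i A = resProj ϖ h '' A := by
  have hcomp : ⇑(resMap ϖ i) = resProj ϖ h ∘ resMap ϖ N :=
    funext fun x => (resProj_resMap ϖ h x).symm
  rw [resSet, hcomp, Set.image_comp, (resMap_surjective ϖ N).image_preimage]

theorem resSet_self (N : ℕ) (A : Set (O ⧸ Ideal.span {ϖ ^ N})) : resSet ϖ N N A = A := by
  simp [resSet_eq_image ϖ le_rfl]

theorem resSet_image_resProj {i j k : ℕ} (hij : i ≤ j) (hjk : j ≤ k)
    (A : Set (O ⧸ Ideal.span {ϖ ^ k})) :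
    resSet ϖ j i (resProj ϖ hjk '' A) = resSet ϖ k i A := by
  simp [resSet_eq_image ϖ hij, resSet_eq_image ϖ (hij.trans hjk), Set.image_image]

theorem natCard_resSet_coe {i N : ℕ} (h : i ≤ N) [DecidableEq (O ⧸ Ideal.span {ϖ ^ i})]
    (s : Finset (O ⧸ Ideal.span {ϖ ^ N})) :
    Nat.card (resSet ϖ N i ↑s) = #(s.image (resProj ϖ h)) := by
  rw [resSet_eq_image ϖ h, ← coe_image, Nat.card_coe_set_eq, Set.ncard_coe_finset]

theorem resMap_image_coset (n : ℕ) (x : O) :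
    resMap ϖ (n + 1) '' {y | ∃ z, y = x + ϖ ^ n * z} =
      resProj ϖ n.le_succ ⁻¹' {resMap ϖ n x} := by
  ext w
  obtain ⟨u, rfl⟩ := resMap_surjective ϖ (n + 1) w
  rw [Set.mem_preimage, Set.mem_singleton_iff, resProj_resMap, resMap_eq_resMap_iff]
  constructor
  · rintro ⟨y, ⟨z, rfl⟩, hy⟩
    obtain ⟨w, hw⟩ := (resMap_eq_resMap_iff ϖ).mp hy
    exact ⟨z - ϖ * w, by linear_combination -hw⟩
  · rintro ⟨z, rfl⟩
    exact ⟨_, ⟨z, rfl⟩, rfl⟩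

theorem finite_quotient_span_pow [Finite (O ⧸ Ideal.span {ϖ ^ 1})] (n : ℕ) :
    Finite (O ⧸ Ideal.span {ϖ ^ n}) := by
  have : Finite (O ⧸ Ideal.span {ϖ}) := pow_one ϖ ▸ ‹Finite (O ⧸ Ideal.span {ϖ ^ 1})›
  rw [← Ideal.span_singleton_pow]
  exact Ideal.finite_quotient_pow ⟨{ϖ}, by simp⟩ n

theorem card_filter_resProj_le [Finite (O ⧸ Ideal.span {ϖ ^ 1})] (n : ℕ)
    [DecidableEq (O ⧸ Ideal.span {ϖ ^ n})]
    (s : Finset (O ⧸ Ideal.span {ϖ ^ (n + 1)})) (ξ : O ⧸ Ideal.span {ϖ ^ n}) :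
    #{a ∈ s | resProj ϖ n.le_succ a = ξ} ≤ Nat.card (O ⧸ Ideal.span {ϖ ^ 1}) := by
  have := Fintype.ofFinite (O ⧸ Ideal.span {ϖ ^ 1})
  rcases (filter (fun a => resProj ϖ n.le_succ a = ξ) s).eq_empty_or_nonempty
    with h | ⟨a₀, ha₀⟩
  · simp [h]
  obtain ⟨x₀, rfl⟩ := resMap_surjective ϖ (n + 1) a₀
  let lift := Function.surjInv (resMap_surjective ϖ 1)
  -- the fibre through `x₀` is `x₀ + ϖ ^ n * (O ⧸ ϖ)`
  rw [Nat.card_eq_fintype_card, ← card_univ]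
  refine card_le_card_of_surjOn (fun c => resMap ϖ (n + 1) (x₀ + ϖ ^ n * lift c)) ?_
  intro a ha
  obtain ⟨x, rfl⟩ := resMap_surjective ϖ (n + 1) a
  simp only [mem_coe, mem_filter, resProj_resMap] at ha ha₀
  obtain ⟨z, hz⟩ := (resMap_eq_resMap_iff ϖ).mp (ha.2.trans ha₀.2.symm)
  obtain ⟨v, hv⟩ : ∃ v, lift (resMap ϖ 1 z) = z + ϖ ^ 1 * v :=
    (resMap_eq_resMap_iff ϖ).mp (Function.surjInv_eq _ _)
  refine ⟨resMap ϖ 1 z, mem_coe.mpr (mem_univ _), (resMap_eq_resMap_iff ϖ).mpr ⟨v, ?_⟩⟩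
  rw [hv, hz]
  ring

theorem IsRegularSubset.succ {N : ℕ} {m : ℕ → ℕ} {B : Set (O ⧸ Ideal.span {ϖ ^ N})}
    (hB : IsRegularSubset ϖ N m B) {A : Set (O ⧸ Ideal.span {ϖ ^ (N + 1)})}
    (hAB : resProj ϖ N.le_succ '' A = B) {k : ℕ}
    (hk : ∀ b ∈ B, Nat.card ↥(A ∩ resProj ϖ N.le_succ ⁻¹' {b}) = k) :
    IsRegularSubset ϖ (N + 1) (Function.update m N k) A := by
  intro n hn x hx
  rcases Nat.lt_succ_iff_lt_or_eq.mp hn with hn | rfl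
  · rw [← resSet_image_resProj ϖ hn.le N.le_succ, hAB] at hx
    rw [Function.update_of_ne hn.ne, ← resSet_image_resProj ϖ hn N.le_succ, hAB]
    exact hB n hn x hx
  · rw [resSet_eq_image ϖ n.le_succ, hAB] at hx
    rw [Function.update_self, resSet_self, resMap_image_coset]
    exact hk _ hx

theorem exists_subset_isRegularSubset [Finite (O ⧸ Ideal.span {ϖ ^ 1})] (N : ℕ)
    (A : Finset (O ⧸ Ideal.span {ϖ ^ N})) :
    ∃ A' ⊆ A, ∃ m : ℕ → ℕ, IsRegularSubset ϖ N m ↑A' ∧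
      (#A : ℝ) ≤ (1 + Real.log (Nat.card (O ⧸ Ideal.span {ϖ ^ 1}))) ^ N * #A' := by
  classical
  set L := 1 + Real.log (Nat.card (O ⧸ Ideal.span {ϖ ^ 1}))
  have hL : 0 ≤ L := by
    have := Real.log_natCast_nonneg (Nat.card (O ⧸ Ideal.span {ϖ ^ 1}))
    positivity
  induction N with
  | zero => exact ⟨A, subset_rfl, 0, fun n hn => absurd hn n.not_lt_zero, by simp⟩
  | succ N ih =>
    set g := resProj ϖ N.le_succ
    obtain ⟨A₁, hA₁A, k, hfib, hA₁⟩ :=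
      exists_large_subset_card_fiber_eq A g (card_filter_resProj_le ϖ N A)
    obtain ⟨B, hBA₁, m, hreg, hB⟩ := ih (A₁.image g)
    set A' := {a ∈ A₁ | g a ∈ B}
    have hfib' : ∀ b ∈ B, #{a ∈ A' | g a = b} = k := fun b hb => by
      rw [filter_filter, ← hfib b (hBA₁ hb)]
      congr 1
      exact filter_congr fun a _ => ⟨And.right, fun h => ⟨h ▸ hb, h⟩⟩
    have himage : A'.image g = B := by
      rw [← filter_image (p := (· ∈ B)), filter_mem_eq_inter, inter_eq_right.mpr hBA₁]
    refine ⟨A', (filter_subset _ _).trans hA₁A, Function.update m N k,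
      hreg.succ ϖ (by rw [← coe_image, himage]) fun b hb =>
        (natCard_coe_inter_preimage_singleton A' g b).trans (hfib' b hb), ?_⟩
    calc (#A : ℝ) ≤ L * #A₁ := hA₁
      _ ≤ L * (k * #(A₁.image g)) := by
          gcongr
          exact_mod_cast card_le_mul_card_image A₁ k fun b hb => (hfib b hb).le
      _ ≤ L * (k * (L ^ N * #B)) := by gcongr
      _ = L ^ (N + 1) * (k * #B) := by ring
      _ ≤ L ^ (N + 1) * #A' := by
          gcongr
          exact_mod_cast mul_card_image_le_card_of_maps_to
            (fun a ha => (mem_filter.mp ha).2) k fun b hb => (hfib' b hb).ge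

end Tower

theorem exists_one_le_log_and_two_mul_log_le_rpow {c : ℝ} (hc : 0 < c) :
    ∃ F₀ : ℕ, ∀ q : ℕ, F₀ ≤ q → 1 ≤ Real.log q ∧ 2 * Real.log q ≤ (q : ℝ) ^ c := by
  have hlog := Real.tendsto_log_atTop.eventually_ge_atTop 1
  have hpow := (isLittleO_log_rpow_atTop hc).bound (by norm_num : (0 : ℝ) < 1 / 2)
  obtain ⟨F₀, hF₀⟩ :=
    Filter.eventually_atTop.mp (tendsto_natCast_atTop_atTop.eventually (hlog.and hpow))
  refine ⟨F₀, fun q hq => ?_⟩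
  obtain ⟨h1, h2⟩ := hF₀ q hq
  rw [Real.norm_of_nonneg (by linarith), Real.norm_of_nonneg (by positivity)] at h2
  exact ⟨h1, by linarith⟩

theorem pow_mul_rpow_le_rpow {q L ε δ δ' : ℝ} {N i : ℕ} (hq : 1 ≤ q) (hL : 0 ≤ L)
    (hLq : L ≤ q ^ (ε * δ / 4)) (hδ' : δ' ≤ ε * δ / 4) (hε : 0 ≤ ε) (hi : N * δ ≤ i) :
    L ^ N * q ^ (N * δ') ≤ q ^ (i * (ε / 2)) := by
  have hq0 : 0 < q := by linarith
  have hLN : L ^ N ≤ q ^ (ε * δ / 4 * N) := by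
    rw [Real.rpow_mul hq0.le, Real.rpow_natCast]
    exact pow_le_pow_left₀ hL hLq N
  have hδ'N : q ^ (N * δ') ≤ q ^ (N * (ε * δ / 4)) :=
    Real.rpow_le_rpow_of_exponent_le hq (by gcongr)
  calc L ^ N * q ^ (N * δ') ≤ q ^ (ε * δ / 4 * N) * q ^ (N * (ε * δ / 4)) :=
        mul_le_mul hLN hδ'N (by positivity) (by positivity)
    _ = q ^ (N * δ * (ε / 2)) := by rw [← Real.rpow_add hq0]; ring_nf
    _ ≤ q ^ (i * (ε / 2)) :=
        Real.rpow_le_rpow_of_exponent_le hq (mul_le_mul_of_nonneg_right hi (by linarith))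

theorem rpow_le_of_rpow_two_mul_le_rpow_mul {q c y : ℝ} (hq : 0 < q)
    (h : q ^ (2 * c) ≤ q ^ c * y) : q ^ c ≤ y := by
  rw [two_mul, Real.rpow_add hq] at h
  exact le_of_mul_le_mul_left h (Real.rpow_pos_of_pos hq c)

/-- **Lemma 15 (extraction of a large regular subset).**
Let `0 < δ < ε < 1` and let the residue field be large (depending on `ε, δ`). Then for any
`0 < δ' ≤ εδ/4` and any `A ⊆ π_{𝔭^N}(𝒪)` with `|π_{𝔭^i}(A)| ≥ |𝔣|^{iε}` for `Nδ' ≤ i ≤ N`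
and `|A + A| ≤ |A||𝔣|^{Nδ'}`, there is a regular subset `A' ⊆ A` with
`|A'| ≥ |A|/(2 log |𝔣|)^N` and `|π_{𝔭^i}(A')| ≥ |𝔣|^{iε/2}` for `Nδ ≤ i ≤ N`. -/
theorem regular_subset_extraction
    (δ ε : ℝ) (hδ : 0 < δ) (hδε : δ < ε) (hε : ε < 1) :
    ∃ F₀ : ℕ,
      ∀ (p : ℕ) [Fact p.Prime]
        (K : Type) [Field K] [Algebra ℚ_[p] K] [FiniteDimensional ℚ_[p] K]
        [Algebra ℤ_[p] K] [IsScalarTower ℤ_[p] ℚ_[p] K]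
        (O : Subalgebra ℤ_[p] K), O = integralClosure ℤ_[p] K →
      ∀ ϖ : O, Irreducible ϖ →
      -- the residue field is large (depending on `ε` and `δ`)
      F₀ ≤ Nat.card (O ⧸ Ideal.span {ϖ ^ 1}) →
      ∀ δ' : ℝ, 0 < δ' → δ' ≤ ε * δ / 4 →
      ∀ N : ℕ, 0 < N → ∀ A : Set (O ⧸ Ideal.span {ϖ ^ N}),
        -- (1) `|π_{𝔭^i}(A)| ≥ |𝔣|^{iε}` for `Nδ' ≤ i ≤ N`
        (∀ i : ℕ, (N : ℝ) * δ' ≤ (i : ℝ) → i ≤ N →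
          (Nat.card (O ⧸ Ideal.span {ϖ ^ 1}) : ℝ) ^ ((i : ℝ) * ε) ≤
            (Nat.card (resSet ϖ N i A) : ℝ)) →
        -- (2) `|A + A| ≤ |A||𝔣|^{Nδ'}`
        ((Nat.card ↥(A + A) : ℝ) ≤
          (Nat.card A : ℝ) * (Nat.card (O ⧸ Ideal.span {ϖ ^ 1}) : ℝ) ^ ((N : ℝ) * δ')) →
        ∃ A' ⊆ A, ∃ m : ℕ → ℕ,
          IsRegularSubset ϖ N m A' ∧
          (Nat.card A : ℝ) / (2 * Real.log (Nat.card (O ⧸ Ideal.span {ϖ ^ 1}))) ^ N ≤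
            (Nat.card A' : ℝ) ∧
          (∀ i : ℕ, (N : ℝ) * δ ≤ (i : ℝ) → i ≤ N →
            (Nat.card (O ⧸ Ideal.span {ϖ ^ 1}) : ℝ) ^ ((i : ℝ) * (ε / 2)) ≤
              (Nat.card (resSet ϖ N i A') : ℝ)) := by
  obtain ⟨F₀, hF₀⟩ := exists_one_le_log_and_two_mul_log_le_rpow (by nlinarith : 0 < ε * δ / 4)
  refine ⟨F₀, fun p _ K _ _ _ _ _ O _ ϖ _ hF δ' _ hδ' N _ A hA hAA => ?_⟩
  set q := Nat.card (O ⧸ Ideal.span {ϖ ^ 1}) with hq_def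
  obtain ⟨hlog, hLq⟩ := hF₀ q hF
  have hq : 1 ≤ q := Nat.one_le_iff_ne_zero.mpr fun h => by norm_num [h] at hlog
  have : Finite (O ⧸ Ideal.span {ϖ ^ 1}) := Nat.finite_of_card_ne_zero (by omega)
  have := finite_quotient_span_pow ϖ N
  classical
  obtain ⟨s, rfl⟩ : ∃ s : Finset (O ⧸ Ideal.span {ϖ ^ N}), ↑s = A :=
    ⟨_, A.toFinite.coe_toFinset⟩
  obtain ⟨t, hts, m, hreg, hst⟩ := exists_subset_isRegularSubset ϖ N s
  rw [← hq_def] at hst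
  replace hst : (#s : ℝ) ≤ (2 * Real.log q) ^ N * #t := hst.trans (by gcongr; linarith)
  rw [← coe_add] at hAA
  simp only [Nat.card_coe_set_eq, Set.ncard_coe_finset] at hAA
  refine ⟨t, coe_subset.mpr hts, m, hreg, ?_, fun i hi hiN => ?_⟩
  · simp only [Nat.card_coe_set_eq, Set.ncard_coe_finset]
    rwa [div_le_iff₀ (by positivity), mul_comm]
  · have hPs := hA i (by nlinarith) hiN
    rw [natCard_resSet_coe ϖ hiN] at hPs ⊢
    refine rpow_le_of_rpow_two_mul_le_rpow_mul (by positivity) ?_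
    calc (q : ℝ) ^ (2 * (i * (ε / 2))) = q ^ (i * ε) := by ring_nf
      _ ≤ #(s.image (resProj ϖ hiN)) := hPs
      _ ≤ (2 * Real.log q) ^ N * q ^ (N * δ') * #(t.image (resProj ϖ hiN)) :=
          card_image_le_mul_card_image_of_card_add_le _ hts hst hAA
      _ ≤ q ^ (i * (ε / 2)) * #(t.image (resProj ϖ hiN)) := by
          gcongr
          exact pow_mul_rpow_le_rpow (by exact_mod_cast hq) (by positivity) hLq hδ'
            (by linarith) hi
end
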